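/- arXiv:2506.09261 — 4 statements merged into one kernel-verified Lean document; each statement's English description precedes it below -/
import Mathlib

section
/- Let (X,d) be a compact metric space and f : X → X an arbitrary self-map. Then for every x ∈ X there exists a chain-recurrent point y ∈ X such that x is in chain relation with y, i.e., for every ε > 0 there is an ε-chain from x to y. -/
/-!
Chain relations are transitive, and for every `y` the forward set `{z | y 𝒞 z}` is closed and
contains `f y`. Order the points `y` with `x 𝒞 y` by `𝒞`: along a chain the forward sets are
nested, nonempty and closed, so by compactness they share a point, which is an upper bound.
Zorn's lemma then gives `m` with `x 𝒞 m` such that `m 𝒞 z` forces `z 𝒞 m`; for `z = f m`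
this yields `m 𝒞 m`.
-/

open Filter Topology Set

variable {X : Type*}

section Defs
variable [PseudoMetricSpace X]

def IsEpsChain (f : X → X) (ε : ℝ) (n : ℕ) (c : ℕ → X) (x y : X) : Prop :=
  1 ≤ n ∧ c 0 = x ∧ c n = y ∧ ∀ i < n, dist (f (c i)) (c (i + 1)) < ε

def EpsChain (f : X → X) (ε : ℝ) (x y : X) : Prop :=
  ∃ n c, IsEpsChain f ε n c x y

/-- The chain relation `x 𝒞 y`. -/
def ChainRel (f : X → X) (x y : X) : Prop :=
  ∀ ε > 0, EpsChain f ε x y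

def EpsChainIn (f : X → X) (S : Set X) (ε : ℝ) (x y : X) : Prop :=
  ∃ n c, IsEpsChain f ε n c x y ∧ ∀ i ≤ n, c i ∈ S

def ChainRelIn (f : X → X) (S : Set X) (x y : X) : Prop :=
  ∀ ε > 0, EpsChainIn f S ε x y

def InternallyChainTransitive (f : X → X) (S : Set X) : Prop :=
  ∀ x ∈ S, ∀ y ∈ S, ∀ ε > 0, EpsChainIn f S ε x y

/-- The nested-chain relation `x 𝒞⊆ y`. -/
def NestedChainRel (f : X → X) (x y : X) : Prop :=
  ∃ ε : ℕ → ℝ, (∀ n, 0 < ε n) ∧ Antitone ε ∧ Tendsto ε atTop (𝓝 0) ∧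
    ∃ N : ℕ → ℕ, ∃ c : ℕ → ℕ → X,
      (∀ n, IsEpsChain f (ε n) (N n) (c n) x y) ∧
      ∀ n, c n '' Set.Iic (N n) ⊆ c (n + 1) '' Set.Iic (N (n + 1))

/-- The nested-chain relation with all chain points inside `S`. -/
def NestedChainRelIn (f : X → X) (S : Set X) (x y : X) : Prop :=
  ∃ ε : ℕ → ℝ, (∀ n, 0 < ε n) ∧ Antitone ε ∧ Tendsto ε atTop (𝓝 0) ∧
    ∃ N : ℕ → ℕ, ∃ c : ℕ → ℕ → X,
      (∀ n, IsEpsChain f (ε n) (N n) (c n) x y ∧ ∀ i ≤ N n, c n i ∈ S) ∧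
      ∀ n, c n '' Set.Iic (N n) ⊆ c (n + 1) '' Set.Iic (N (n + 1))

end Defs

/-- Strong `(ε,d)`-chain for an explicitly given distance function `d`. -/
def StrongEpsChainWith (d : X → X → ℝ) (f : X → X) (ε : ℝ) (x y : X) : Prop :=
  ∃ n, 1 ≤ n ∧ ∃ c : ℕ → X, c 0 = x ∧ c n = y ∧
    (∑ i ∈ Finset.range n, d (f (c i)) (c (i + 1))) < ε

/-- The strong chain relation `x 𝒮𝒞_d y`. -/
def StrongChainRelWith (d : X → X → ℝ) (f : X → X) (x y : X) : Prop :=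
  ∀ ε > 0, StrongEpsChainWith d f ε x y

theorem exists_rel_self_of_isClosed {Y : Type*} [TopologicalSpace Y] [CompactSpace Y]
    {R : Y → Y → Prop} (trans : ∀ {a b c : Y}, R a b → R b c → R a c)
    (closed : ∀ a, IsClosed {b | R a b}) (nonempty : ∀ a, ∃ b, R a b) (x : Y) :
    ∃ y, R x y ∧ R y y := by
  let r : {y // R x y} → {y // R x y} → Prop := fun a b => R a b
  have chain_bdd : ∀ c, IsChain r c → ∃ ub, ∀ a ∈ c, r a ub := by
    intro c hc
    rcases c.eq_empty_or_nonempty with rfl | ⟨a₀, ha₀⟩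
    · obtain ⟨z, hxz⟩ := nonempty x
      exact ⟨⟨z, hxz⟩, by simp⟩
    have : Nonempty c := ⟨⟨a₀, ha₀⟩⟩
    have hdir : Directed (· ⊇ ·) fun a : c => {b | R a b} := by
      rintro ⟨a, ha⟩ ⟨b, hb⟩
      rcases eq_or_ne a b with rfl | hab
      · exact ⟨⟨a, ha⟩, le_rfl, le_rfl⟩
      rcases hc ha hb hab with h | h
      · exact ⟨⟨b, hb⟩, fun _ hz => trans h hz, le_rfl⟩
      · exact ⟨⟨a, ha⟩, le_rfl, fun _ hz => trans h hz⟩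
    obtain ⟨z, hz⟩ := IsCompact.nonempty_iInter_of_directed_nonempty_isCompact_isClosed _ hdir
      (fun a => nonempty a) (fun a => (closed a).isCompact) (fun a => closed a)
    rw [mem_iInter] at hz
    exact ⟨⟨z, trans a₀.2 (hz ⟨a₀, ha₀⟩)⟩, fun a ha => hz ⟨a, ha⟩⟩
  obtain ⟨⟨m, hxm⟩, hmax⟩ := exists_maximal_of_chains_bounded chain_bdd trans
  obtain ⟨z, hmz⟩ := nonempty m
  exact ⟨m, hxm, trans hmz (hmax ⟨z, trans hxm hmz⟩ hmz)⟩

section ChainRel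
variable [PseudoMetricSpace X] {f : X → X} {ε δ : ℝ} {x y z : X}

lemma epsChain_apply (hε : 0 < ε) (x : X) : EpsChain f ε x (f x) :=
  ⟨1, fun i => if i = 0 then x else f x, le_rfl, rfl, rfl, fun i hi => by
    obtain rfl : i = 0 := by omega
    simpa using hε⟩

lemma EpsChain.trans (hxy : EpsChain f ε x y) (hyz : EpsChain f ε y z) : EpsChain f ε x z := by
  obtain ⟨n, c, hn, hc0, hcn, hc⟩ := hxy
  obtain ⟨m, d, hm, hd0, hdm, hd⟩ := hyz
  refine ⟨n + m, fun i => if i ≤ n then c i else d (i - n), by omega, by simp [hc0],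
    by simp [hdm, show ¬n + m ≤ n by omega], fun i hi => ?_⟩
  rcases lt_trichotomy i n with h | rfl | h
  · simpa [h.le, Nat.succ_le_of_lt h] using hc i h
  · simpa [hcn, ← hd0] using hd 0 hm
  · simpa [h.not_ge, show ¬i + 1 ≤ n by omega, show i + 1 - n = i - n + 1 by omega]
      using hd (i - n) (by omega)

lemma EpsChain.of_dist_lt_right (hxy : EpsChain f ε x y) (hyz : dist y z < δ) :
    EpsChain f (ε + δ) x z := by
  have hδ : 0 < δ := dist_nonneg.trans_lt hyz
  obtain ⟨n, c, hn, hc0, hcn, hc⟩ := hxy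
  refine ⟨n, fun i => if i = n then z else c i, hn, by simp [hc0, show 0 ≠ n by omega],
    by simp, fun i hi => ?_⟩
  by_cases hi' : i + 1 = n
  · simp only [hi', if_pos, hi.ne, if_false]
    calc dist (f (c i)) z ≤ dist (f (c i)) y + dist y z := dist_triangle _ _ _
      _ < ε + δ := add_lt_add (by simpa [hi', hcn] using hc i hi) hyz
  · simp only [hi', hi.ne, if_false]
    linarith [hc i hi]

lemma ChainRel.trans (hxy : ChainRel f x y) (hyz : ChainRel f y z) : ChainRel f x z :=
  fun ε hε => (hxy ε hε).trans (hyz ε hε)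

lemma chainRel_apply (x : X) : ChainRel f x (f x) :=
  fun _ hε => epsChain_apply hε x

lemma isClosed_setOf_chainRel (f : X → X) (x : X) : IsClosed {z | ChainRel f x z} := by
  refine isClosed_of_closure_subset fun z hz ε hε => ?_
  obtain ⟨y, hxy, hyz⟩ := Metric.mem_closure_iff.1 hz (ε / 2) (half_pos hε)
  rw [← add_halves ε]
  exact (hxy (ε / 2) (half_pos hε)).of_dist_lt_right (by rwa [dist_comm])

end ChainRel

theorem stmt1 [MetricSpace X] [CompactSpace X] (f : X → X) (x : X) :
    ∃ y : X, ChainRel f y y ∧ ChainRel f x y := by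
  obtain ⟨y, hxy, hyy⟩ := exists_rel_self_of_isClosed ChainRel.trans (isClosed_setOf_chainRel f)
    (fun y => ⟨f y, chainRel_apply y⟩) x
  exact ⟨y, hyy, hxy⟩
end

section
/- Let X be a compact metrizable space and f : X → X an arbitrary self-map. Then there exists a point x ∈ X that lies in the generalized recurrent set GR(f), i.e., x is strong chain-recurrent with respect to every metric d compatible with the topology of X. -/
open Filter Topology Set

variable {X : Type*}

/-!
For each compatible metric the strong chain relation is transitive, relates `x` to `f x`, and has
closed successor sets (a chain ending near `y` is redirected to `y` at small extra cost); all three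
properties survive the intersection over all compatible metrics. In a compact space such a
relation `R` has a point with `R x x`: by Zorn there is a minimal successor set `F x`, and for
`y ∈ F x` minimality gives `F y = F x ∋ y`.
-/

namespace StrongEpsChainWith

lemma append {d : X → X → ℝ} {f : X → X} {ε₁ ε₂ : ℝ} {x y z : X}
    (h₁ : StrongEpsChainWith d f ε₁ x y) (h₂ : StrongEpsChainWith d f ε₂ y z) :
    StrongEpsChainWith d f (ε₁ + ε₂) x z := by
  obtain ⟨n, hn, c, rfl, rfl, hc⟩ := h₁
  obtain ⟨m, -, c', hc'0, rfl, hc'⟩ := h₂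
  set e : ℕ → X := fun i => if i ≤ n then c i else c' (i - n)
  have he_left : ∀ i ≤ n, e i = c i := fun i hi => if_pos hi
  have he_right : ∀ i, e (n + i) = c' i := by
    rintro (_ | i)
    · simp [e, hc'0]
    · simp [e]
  refine ⟨n + m, by omega, e, he_left 0 n.zero_le, he_right m, ?_⟩
  rw [Finset.sum_range_add]
  refine add_lt_add ((Finset.sum_congr rfl fun i hi => ?_).trans_lt hc)
    ((Finset.sum_congr rfl fun i _ => ?_).trans_lt hc')
  · rw [Finset.mem_range] at hi
    rw [he_left i hi.le, he_left (i + 1) hi]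
  · rw [add_assoc, he_right, he_right]

lemma replace_last [PseudoMetricSpace X] {f : X → X} {ε δ : ℝ} {x y z : X}
    (h : StrongEpsChainWith dist f ε x y) (hyz : dist y z < δ) :
    StrongEpsChainWith dist f (ε + δ) x z := by
  obtain ⟨n, hn, c, hc0, rfl, hc⟩ := h
  obtain ⟨k, rfl⟩ : ∃ k, n = k + 1 := ⟨n - 1, by omega⟩
  have hc' : ∀ i < k + 1, Function.update c (k + 1) z i = c i := fun i hi =>
    Function.update_of_ne hi.ne _ _
  refine ⟨k + 1, hn, Function.update c (k + 1) z, by rw [hc' 0 k.succ_pos, hc0], by simp, ?_⟩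
  rw [Finset.sum_range_succ] at hc ⊢
  rw [Finset.sum_congr rfl fun i hi => by
    rw [hc' i ((Finset.mem_range.mp hi).trans k.lt_succ_self),
      hc' (i + 1) (Nat.succ_lt_succ (Finset.mem_range.mp hi))]]
  rw [hc' k k.lt_succ_self, Function.update_self]
  linarith [dist_triangle (f (c k)) (c (k + 1)) z]

end StrongEpsChainWith

section PseudoMetric

variable [PseudoMetricSpace X]

lemma strongChainRelWith_apply (f : X → X) (x : X) : StrongChainRelWith dist f x (f x) :=
  fun _ hε => ⟨1, le_rfl, fun i => f^[i] x, rfl, rfl, by simpa using hε⟩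

lemma isClosed_setOf_strongChainRelWith (f : X → X) (x : X) :
    IsClosed {y | StrongChainRelWith dist f x y} := by
  refine isClosed_of_closure_subset fun y hy ε hε => ?_
  obtain ⟨z, hz, hyz⟩ := Metric.mem_closure_iff.mp hy (ε / 2) (half_pos hε)
  rw [← add_halves ε]
  exact (hz (ε / 2) (half_pos hε)).replace_last (dist_comm y z ▸ hyz)

end PseudoMetric

section Topological

variable [t : TopologicalSpace X]

/-- `GeneralizedChainRel f x x` says that `x ∈ GR(f)`. -/
def GeneralizedChainRel (f : X → X) (x y : X) : Prop :=
  ∀ m : MetricSpace X, m.toUniformSpace.toTopologicalSpace = t →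
    StrongChainRelWith (fun a b => @dist X m.toDist a b) f x y

lemma GeneralizedChainRel.trans {f : X → X} {x y z : X} (h₁ : GeneralizedChainRel f x y)
    (h₂ : GeneralizedChainRel f y z) : GeneralizedChainRel f x z := fun m hm ε hε => by
  rw [← add_halves ε]
  exact ((h₁ m hm) (ε / 2) (half_pos hε)).append ((h₂ m hm) (ε / 2) (half_pos hε))

instance (f : X → X) : IsTrans X (GeneralizedChainRel f) :=
  ⟨fun _ _ _ => GeneralizedChainRel.trans⟩

lemma generalizedChainRel_apply (f : X → X) (x : X) : GeneralizedChainRel f x (f x) :=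
  fun m _ => @strongChainRelWith_apply X m.toPseudoMetricSpace f x

lemma isClosed_setOf_generalizedChainRel (f : X → X) (x : X) :
    IsClosed {y | GeneralizedChainRel f x y} := by
  simp only [GeneralizedChainRel, Set.ofPred_forall]
  refine isClosed_iInter fun m => isClosed_iInter fun hm => ?_
  subst hm
  exact @isClosed_setOf_strongChainRelWith X m.toPseudoMetricSpace f x

end Topological

lemma exists_rel_self_of_isClosed_s3 [TopologicalSpace X] [CompactSpace X] [Nonempty X]
    {R : X → X → Prop} [IsTrans X R] (hne : ∀ x, ∃ y, R x y)
    (hclosed : ∀ x, IsClosed {y | R x y}) : ∃ x, R x x := by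
  set F : X → Set X := fun x => {y | R x y}
  have hF_anti : ∀ {x y}, R x y → F y ⊆ F x := fun hxy _ hyz => _root_.trans hxy hyz
  -- the successor set of a point in the intersection of a chain is a lower bound for the chain
  have hchain : ∀ c ⊆ range F, IsChain (· ⊆ ·) c → c.Nonempty →
      ∃ lb ∈ range F, ∀ s ∈ c, lb ⊆ s := by
    rintro c hcF hc ⟨s, hs⟩
    have : Nonempty c := ⟨⟨s, hs⟩⟩
    obtain ⟨z, hz⟩ := IsCompact.nonempty_sInter_of_directed_nonempty_isCompact_isClosed
      (show IsChain (· ⊇ ·) c from hc.symm).directedOn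
      (fun U hU => by obtain ⟨x, rfl⟩ := hcF hU; exact hne x)
      (fun U hU => by obtain ⟨x, rfl⟩ := hcF hU; exact (hclosed x).isCompact)
      (fun U hU => by obtain ⟨x, rfl⟩ := hcF hU; exact hclosed x)
    refine ⟨F z, ⟨z, rfl⟩, fun U hU => ?_⟩
    obtain ⟨x, rfl⟩ := hcF hU
    exact hF_anti (mem_sInter.mp hz _ hU)
  obtain ⟨_, -, hmin⟩ := zorn_superset_nonempty (range F) hchain (F (Classical.arbitrary X)) ⟨_, rfl⟩
  obtain ⟨x, rfl⟩ := hmin.prop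
  obtain ⟨y, hxy⟩ := hne x
  exact ⟨y, hmin.2 ⟨y, rfl⟩ (hF_anti hxy) hxy⟩

theorem stmt3_general [t : TopologicalSpace X] [CompactSpace X]
    [Nonempty X] (f : X → X) :
    ∃ x : X, ∀ m : MetricSpace X, m.toUniformSpace.toTopologicalSpace = t →
      StrongChainRelWith (fun a b => @dist X m.toDist a b) f x x :=
  exists_rel_self_of_isClosed_s3 (fun x => ⟨f x, generalizedChainRel_apply f x⟩)
    (isClosed_setOf_generalizedChainRel f)

theorem stmt3 [t : TopologicalSpace X] [CompactSpace X] [TopologicalSpace.MetrizableSpace X]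
    [Nonempty X] (f : X → X) :
    ∃ x : X, ∀ m : MetricSpace X, m.toUniformSpace.toTopologicalSpace = t →
      StrongChainRelWith (fun a b => @dist X m.toDist a b) f x x :=
  stmt3_general (t := t) f
end

section
/- Let (X,d) be a compact metric space and f : X → X an arbitrary self-map. Then for every x ∈ X there exists a nonempty closed f-invariant internally chain transitive set S ⊆ X such that x is in chain relation with every point of S. -/
/-!
The points chain-reachable from `x` form a nonempty closed `f`-invariant set; no continuity of `f`
is needed, since closedness only requires moving the endpoint of the last jump of a chain.
By compactness and Zorn's lemma this set contains a minimal nonempty closed invariant set `S`.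
For `z ∈ S`, the points chain-reachable from `z` through `S` again form a nonempty closed
invariant subset of `S`, so by minimality they are all of `S`.
-/

open Filter Topology Set

variable {X : Type*}

section ChainsIn

variable [PseudoMetricSpace X] {f : X → X} {S : Set X} {ε δ : ℝ} {x y z : X}

lemma epsChainIn_single (hx : x ∈ S) (hy : y ∈ S) (h : dist (f x) y < ε) :
    EpsChainIn f S ε x y := by
  refine ⟨1, fun i => if i = 0 then x else y, ⟨le_rfl, rfl, rfl, ?_⟩, ?_⟩
  · intro i hi
    obtain rfl : i = 0 := by omega
    simpa using h
  · intro i _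
    dsimp only
    split_ifs <;> assumption

lemma EpsChainIn.snoc (h : EpsChainIn f S ε x y) (hz : z ∈ S) (hyz : dist (f y) z < ε) :
    EpsChainIn f S ε x z := by
  obtain ⟨n, c, ⟨hn, hc0, hcn, hstep⟩, hmem⟩ := h
  refine ⟨n + 1, fun i => if i ≤ n then c i else z, ⟨by omega, by simp [hc0], by simp, ?_⟩, ?_⟩
  · intro i hi
    rcases Nat.lt_or_ge i n with hin | hin
    · simpa [hin.le, Nat.succ_le_of_lt hin] using hstep i hin
    · obtain rfl : i = n := by omega
      simpa [hcn] using hyz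
  · intro i _
    dsimp only
    split_ifs with hin
    exacts [hmem i hin, hz]

lemma EpsChainIn.replace_last (h : EpsChainIn f S δ x y) (hz : z ∈ S)
    (hε : δ + dist y z ≤ ε) : EpsChainIn f S ε x z := by
  obtain ⟨n, c, ⟨hn, hc0, hcn, hstep⟩, hmem⟩ := h
  have hδε : δ ≤ ε := by linarith [dist_nonneg (x := y) (y := z)]
  refine ⟨n, Function.update c n z, ⟨hn, ?_, by simp, ?_⟩, ?_⟩
  · rwa [Function.update_of_ne (by omega)]
  · intro i hi
    rw [Function.update_of_ne hi.ne]
    rcases eq_or_ne (i + 1) n with hlast | hlast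
    · rw [hlast, Function.update_self]
      calc dist (f (c i)) z ≤ dist (f (c i)) (c (i + 1)) + dist y z := by
            rw [hlast, hcn]; exact dist_triangle _ _ _
        _ < δ + dist y z := by gcongr; exact hstep i hi
        _ ≤ ε := hε
    · rw [Function.update_of_ne hlast]
      exact (hstep i hi).trans_le hδε
  · intro i hi
    rcases eq_or_ne i n with rfl | hin
    · simpa using hz
    · simpa [hin] using hmem i hi

lemma ChainRelIn.mem (h : ChainRelIn f S x y) : y ∈ S := by
  obtain ⟨n, c, ⟨-, -, hcn, -⟩, hmem⟩ := h 1 one_pos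
  exact hcn ▸ hmem n le_rfl

lemma ChainRelIn.chainRel (h : ChainRelIn f S x y) : ChainRel f x y := fun ε hε => by
  obtain ⟨n, c, hc, -⟩ := h ε hε
  exact ⟨n, c, hc⟩

end ChainsIn

section ChainSetIn

variable [PseudoMetricSpace X] {f : X → X} {S : Set X} {x : X}

def chainSetIn (f : X → X) (S : Set X) (x : X) : Set X := {y | ChainRelIn f S x y}

lemma chainSetIn_subset : chainSetIn f S x ⊆ S := fun _ hy => ChainRelIn.mem hy

lemma apply_mem_chainSetIn (hx : x ∈ S) (hS : MapsTo f S S) : f x ∈ chainSetIn f S x :=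
  fun _ hε => epsChainIn_single hx (hS hx) (by simpa using hε)

lemma mapsTo_chainSetIn (hS : MapsTo f S S) : MapsTo f (chainSetIn f S x) (chainSetIn f S x) :=
  fun y hy ε hε => (hy ε hε).snoc (hS (chainSetIn_subset hy)) (by simpa using hε)

lemma isClosed_chainSetIn (hS : IsClosed S) : IsClosed (chainSetIn f S x) := by
  refine isClosed_of_closure_subset fun y hy ε hε => ?_
  have hyS : y ∈ S := hS.closure_subset_iff.mpr chainSetIn_subset hy
  obtain ⟨y', hy', hdist⟩ := Metric.mem_closure_iff.mp hy (ε / 2) (by linarith)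
  exact (hy' (ε / 2) (by linarith)).replace_last hyS (by rw [dist_comm]; linarith)

end ChainSetIn

lemma exists_minimal_isClosed_mapsTo_subset [TopologicalSpace X] [CompactSpace X] (f : X → X)
    {T : Set X} (hne : T.Nonempty) (hcl : IsClosed T) (hT : MapsTo f T T) :
    ∃ S ⊆ T, Minimal (fun S : Set X => S.Nonempty ∧ IsClosed S ∧ MapsTo f S S) S := by
  refine zorn_superset_nonempty {S | S.Nonempty ∧ IsClosed S ∧ MapsTo f S S}
    (fun c hc hchain hcne => ?_) T ⟨hne, hcl, hT⟩
  have : Nonempty c := hcne.to_subtype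
  have hchain' : IsChain (· ⊇ ·) c := hchain.symm
  refine ⟨⋂₀ c, ⟨?_, isClosed_sInter fun S hS => (hc hS).2.1, ?_⟩,
    fun _ => sInter_subset_of_mem⟩
  · exact IsCompact.nonempty_sInter_of_directed_nonempty_isCompact_isClosed hchain'.directedOn
      (fun S hS => (hc hS).1) (fun S hS => (hc hS).2.1.isCompact) (fun S hS => (hc hS).2.1)
  · exact fun y hy => mem_sInter.mpr fun S hS => (hc hS).2.2 (hy S hS)

lemma internallyChainTransitive_of_minimal [PseudoMetricSpace X] {f : X → X} {S : Set X}
    (hS : Minimal (fun S : Set X => S.Nonempty ∧ IsClosed S ∧ MapsTo f S S) S) :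
    InternallyChainTransitive f S := by
  obtain ⟨-, hcl, hmaps⟩ := hS.prop
  intro z hz y hy
  have hreach : chainSetIn f S z = S :=
    hS.eq_of_subset ⟨⟨f z, apply_mem_chainSetIn hz hmaps⟩, isClosed_chainSetIn hcl,
      mapsTo_chainSetIn hmaps⟩ chainSetIn_subset
  exact hreach.ge hy

theorem stmt6 [MetricSpace X] [CompactSpace X] (f : X → X) (x : X) :
    ∃ S : Set X, S.Nonempty ∧ IsClosed S ∧ Set.MapsTo f S S ∧
      InternallyChainTransitive f S ∧ ∀ y ∈ S, ChainRel f x y := by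
  obtain ⟨S, hS, hmin⟩ := exists_minimal_isClosed_mapsTo_subset f
    ⟨f x, apply_mem_chainSetIn (mem_univ x) (mapsTo_univ f _)⟩
    (isClosed_chainSetIn (f := f) (x := x) isClosed_univ) (mapsTo_chainSetIn (mapsTo_univ f _))
  exact ⟨S, hmin.prop.1, hmin.prop.2.1, hmin.prop.2.2, internallyChainTransitive_of_minimal hmin,
    fun y hy => (hS hy).chainRel⟩
end

section
/- Let (X,d) be a compact metric space and f : X → X an arbitrary self-map. Then (X,f) has a 𝒞⊆-transitive subsystem: there is a nonempty closed f-invariant set S such that x 𝒞⊆ y for all x, y ∈ S. -/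
/-!
By Zorn's lemma and Cantor's intersection theorem, a compact space carries a minimal subsystem `M`.
For `x ∈ M`, the points reachable from `x` by `ε`-chains inside `M` for every `ε > 0` form a
subsystem (closed because the last jump of a chain may absorb a small perturbation of its endpoint,
invariant because a chain may be extended by one exact step), so by minimality they are all of `M`.
Hence any two points of `M` are joined by `ε`-chains in `M` through any prescribed finite subset
of `M`, and feeding each chain's points into the next one with `ε = 2⁻ⁿ` yields nested chains.
-/

open Filter Topology Set

variable {X : Type*}

open Function

theorem exists_seq_of_exists_succ {α : Type*} {p : ℕ → α → Prop} {r : α → α → Prop}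
    (h0 : ∃ a, p 0 a) (hs : ∀ n a, p n a → ∃ b, p (n + 1) b ∧ r a b) :
    ∃ u : ℕ → α, (∀ n, p n (u n)) ∧ ∀ n, r (u n) (u (n + 1)) := by
  choose F hF hr using hs
  let u : ∀ n, {a // p n a} := fun n =>
    Nat.rec ⟨h0.choose, h0.choose_spec⟩ (fun n a => ⟨F n a.1 a.2, hF n a.1 a.2⟩) n
  exact ⟨fun n => (u n).1, fun n => (u n).2, fun n => hr n (u n).1 (u n).2⟩

structure IsSubsystem [TopologicalSpace X] (f : X → X) (S : Set X) : Prop where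
  nonempty : S.Nonempty
  isClosed : IsClosed S
  mapsTo : MapsTo f S S

theorem exists_minimal_isSubsystem [TopologicalSpace X] [CompactSpace X] [Nonempty X]
    (f : X → X) : ∃ M, Minimal (IsSubsystem f) M := by
  have hchains : ∀ c ⊆ {S | IsSubsystem f S}, IsChain (· ⊆ ·) c → c.Nonempty →
      ∃ lb ∈ {S | IsSubsystem f S}, ∀ s ∈ c, lb ⊆ s := by
    intro c hc hchain hcne
    have : Nonempty c := hcne.to_subtype
    refine ⟨⋂₀ c, ⟨?_, isClosed_sInter fun s hs => (hc hs).isClosed, ?_⟩,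
      fun s => sInter_subset_of_mem⟩
    · exact IsCompact.nonempty_sInter_of_directed_nonempty_isCompact_isClosed
        (IsChain.directedOn (r := fun s t : Set X => s ⊇ t) hchain.symm)
        (fun s hs => (hc hs).nonempty)
        (fun s hs => (hc hs).isClosed.isCompact) (fun s hs => (hc hs).isClosed)
    · exact fun z hz => mem_sInter.2 fun s hs => (hc hs).mapsTo (hz s hs)
  obtain ⟨M, -, hM⟩ := zorn_superset_nonempty _ hchains univ
    ⟨univ_nonempty, isClosed_univ, mapsTo_univ f _⟩
  exact ⟨M, hM⟩

def chainAppend (n : ℕ) (c c' : ℕ → X) : ℕ → X :=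
  fun i => if i ≤ n then c i else c' (i - n)

theorem chainAppend_of_le {n i : ℕ} {c c' : ℕ → X} (hi : i ≤ n) : chainAppend n c c' i = c i :=
  if_pos hi

theorem chainAppend_of_ge {n i : ℕ} {c c' : ℕ → X} (h : c n = c' 0) (hi : n ≤ i) :
    chainAppend n c c' i = c' (i - n) := by
  rcases hi.eq_or_lt with rfl | hlt
  · simp [chainAppend, h]
  · exact if_neg hlt.not_ge

theorem image_chainAppend {n m : ℕ} {c c' : ℕ → X} (h : c n = c' 0) :
    chainAppend n c c' '' Iic (n + m) = c '' Iic n ∪ c' '' Iic m := by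
  apply Subset.antisymm
  · rintro _ ⟨i, hi, rfl⟩
    rcases le_or_gt i n with hin | hni
    · exact .inl ⟨i, hin, (chainAppend_of_le hin).symm⟩
    · exact .inr ⟨i - n, by simp only [mem_Iic] at hi ⊢; omega,
        (chainAppend_of_ge h hni.le).symm⟩
  · rintro _ (⟨i, hi, rfl⟩ | ⟨j, hj, rfl⟩)
    · exact ⟨i, by simp only [mem_Iic] at hi ⊢; omega, chainAppend_of_le hi⟩
    · refine ⟨n + j, by simp only [mem_Iic] at hj ⊢; omega, ?_⟩
      rw [chainAppend_of_ge h (by omega), Nat.add_sub_cancel_left]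

section Chains

variable [PseudoMetricSpace X] {f : X → X} {S : Set X} {ε δ : ℝ} {n m : ℕ} {c c' : ℕ → X}
  {x y z : X}

theorem IsEpsChain.append (h : IsEpsChain f ε n c x y) (h' : IsEpsChain f ε m c' y z) :
    IsEpsChain f ε (n + m) (chainAppend n c c') x z := by
  obtain ⟨hn, hc0, hcn, hstep⟩ := h
  obtain ⟨hm, hc'0, hc'm, hstep'⟩ := h'
  have hjoin : c n = c' 0 := hcn.trans hc'0.symm
  refine ⟨by omega, by rw [chainAppend_of_le n.zero_le, hc0], ?_, fun i hi => ?_⟩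
  · rw [chainAppend_of_ge hjoin (by omega), Nat.add_sub_cancel_left, hc'm]
  rcases lt_or_ge i n with hin | hni
  · rw [chainAppend_of_le hin.le, chainAppend_of_le hin]
    exact hstep i hin
  · rw [chainAppend_of_ge hjoin hni, chainAppend_of_ge hjoin (by omega), Nat.sub_add_comm hni]
    exact hstep' (i - n) (by omega)

theorem EpsChainIn.right_mem (h : EpsChainIn f S ε x y) : y ∈ S := by
  obtain ⟨n, c, ⟨-, -, hcn, -⟩, hcS⟩ := h
  exact hcn ▸ hcS n le_rfl

theorem EpsChainIn.trans (h : EpsChainIn f S ε x y) (h' : EpsChainIn f S ε y z) :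
    EpsChainIn f S ε x z := by
  obtain ⟨n, c, hc, hcS⟩ := h
  obtain ⟨m, c', hc', hc'S⟩ := h'
  refine ⟨n + m, chainAppend n c c', hc.append hc', fun i hi => ?_⟩
  have hmem : chainAppend n c c' i ∈ c '' Iic n ∪ c' '' Iic m :=
    image_chainAppend (hc.2.2.1.trans hc'.2.1.symm) ▸ mem_image_of_mem _ hi
  rcases hmem with ⟨j, hj, hji⟩ | ⟨j, hj, hji⟩
  · exact hji ▸ hcS j hj
  · exact hji ▸ hc'S j hj

theorem epsChainIn_apply (hS : MapsTo f S S) (hx : x ∈ S) (hε : 0 < ε) :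
    EpsChainIn f S ε x (f x) :=
  ⟨1, fun i => f^[i] x, ⟨le_rfl, rfl, rfl, fun i _ => by simpa [iterate_succ_apply'] using hε⟩,
    fun i _ => hS.iterate i hx⟩

theorem EpsChainIn.of_dist_lt (h : EpsChainIn f S ε x y) (hyz : dist y z < δ) (hz : z ∈ S) :
    EpsChainIn f S (ε + δ) x z := by
  obtain ⟨n, c, ⟨hn, hc0, hcn, hstep⟩, hcS⟩ := h
  have hδ : 0 < δ := dist_nonneg.trans_lt hyz
  refine ⟨n, update c n z, ⟨hn, ?_, update_self .., fun i hi => ?_⟩, fun i hi => ?_⟩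
  · rwa [update_of_ne (by omega)]
  · rw [update_of_ne hi.ne]
    by_cases hlast : i + 1 = n
    · rw [hlast, update_self]
      calc dist (f (c i)) z ≤ dist (f (c i)) (c (i + 1)) + dist (c (i + 1)) z := dist_triangle ..
        _ < ε + δ := add_lt_add (hstep i hi) (by rwa [hlast, hcn])
    · rw [update_of_ne hlast]
      linarith [hstep i hi]
  · rw [update_apply]
    split_ifs
    exacts [hz, hcS i hi]

theorem IsSubsystem.isSubsystem_setOf_chainRelIn (hS : IsSubsystem f S) (hx : x ∈ S) :
    IsSubsystem f {z | ChainRelIn f S x z} where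
  nonempty := ⟨f x, fun _ hε => epsChainIn_apply hS.mapsTo hx hε⟩
  isClosed := by
    refine isClosed_of_closure_subset fun z hz ε hε => ?_
    have hzS : z ∈ S :=
      hS.isClosed.closure_subset_iff.2 (fun w hw => (hw 1 one_pos).right_mem) hz
    obtain ⟨w, hw, hzw⟩ := Metric.mem_closure_iff.1 hz (ε / 2) (half_pos hε)
    exact add_halves ε ▸ (hw (ε / 2) (half_pos hε)).of_dist_lt (dist_comm z w ▸ hzw) hzS
  mapsTo _ hz _ hε := (hz _ hε).trans (epsChainIn_apply hS.mapsTo (hz _ hε).right_mem hε)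

theorem Minimal.internallyChainTransitive {M : Set X} (hM : Minimal (IsSubsystem f) M) :
    InternallyChainTransitive f M := by
  intro x hx y hy
  have hreach : {z | ChainRelIn f M x z} = M :=
    hM.eq_of_subset (hM.prop.isSubsystem_setOf_chainRelIn hx) fun z hz =>
      (hz 1 one_pos).right_mem
  exact hreach.symm.subset hy

theorem InternallyChainTransitive.exists_isEpsChain_through_finite
    (hS : InternallyChainTransitive f S) (hε : 0 < ε) {F : Set X} (hF : F.Finite) :
    F ⊆ S → ∀ x ∈ S, ∀ y ∈ S,
      ∃ n c, IsEpsChain f ε n c x y ∧ F ⊆ c '' Iic n ∧ c '' Iic n ⊆ S := by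
  induction F, hF using Set.Finite.induction_on with
  | empty =>
    intro _ x hx y hy
    obtain ⟨n, c, hc, hcS⟩ := hS x hx y hy ε hε
    exact ⟨n, c, hc, empty_subset _, image_subset_iff.2 hcS⟩
  | @insert a F _ _ ih =>
    intro haFS x hx y hy
    obtain ⟨haS, hFS⟩ := insert_subset_iff.1 haFS
    obtain ⟨n, c, hc, hcS⟩ := hS x hx a haS ε hε
    obtain ⟨m, c', hc', hFc', hc'S⟩ := ih hFS a haS y hy
    have himage := image_chainAppend (m := m) (hc.2.2.1.trans hc'.2.1.symm)
    refine ⟨n + m, chainAppend n c c', hc.append hc', ?_, ?_⟩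
    · rw [himage, insert_subset_iff]
      exact ⟨.inr ⟨0, Nat.zero_le m, hc'.2.1⟩, hFc'.trans subset_union_right⟩
    · rw [himage]
      exact union_subset (image_subset_iff.2 hcS) hc'S

theorem InternallyChainTransitive.nestedChainRel (hS : InternallyChainTransitive f S)
    (hx : x ∈ S) (hy : y ∈ S) : NestedChainRel f x y := by
  set ε : ℕ → ℝ := fun n => (1 / 2) ^ n
  have hε : ∀ n, 0 < ε n := fun n => by positivity
  have hstart : ∃ a : ℕ × (ℕ → X), IsEpsChain f (ε 0) a.1 a.2 x y ∧ a.2 '' Iic a.1 ⊆ S := by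
    obtain ⟨n, c, hc, -, hcS⟩ :=
      hS.exists_isEpsChain_through_finite (hε 0) finite_empty (empty_subset _) x hx y hy
    exact ⟨(n, c), hc, hcS⟩
  have hrefine : ∀ k (a : ℕ × (ℕ → X)), IsEpsChain f (ε k) a.1 a.2 x y ∧ a.2 '' Iic a.1 ⊆ S →
      ∃ b : ℕ × (ℕ → X), (IsEpsChain f (ε (k + 1)) b.1 b.2 x y ∧ b.2 '' Iic b.1 ⊆ S) ∧
        a.2 '' Iic a.1 ⊆ b.2 '' Iic b.1 := by
    rintro k ⟨n, c⟩ ⟨-, hcS⟩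
    obtain ⟨m, c', hc', hcc', hc'S⟩ :=
      hS.exists_isEpsChain_through_finite (hε (k + 1)) ((finite_Iic n).image c) hcS x hx y hy
    exact ⟨(m, c'), ⟨hc', hc'S⟩, hcc'⟩
  obtain ⟨u, hu, hnest⟩ := exists_seq_of_exists_succ hstart hrefine
  exact ⟨ε, hε, fun a b hab => pow_le_pow_of_le_one (by norm_num) (by norm_num) hab,
    tendsto_pow_atTop_nhds_zero_of_lt_one (by norm_num) (by norm_num),
    fun k => (u k).1, fun k => (u k).2, fun k => (hu k).1, hnest⟩

end Chains

theorem stmt13 [MetricSpace X] [CompactSpace X] [Nonempty X] (f : X → X) :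
    ∃ S : Set X, S.Nonempty ∧ IsClosed S ∧ Set.MapsTo f S S ∧
      ∀ x ∈ S, ∀ y ∈ S, NestedChainRel f x y := by
  obtain ⟨M, hM⟩ := exists_minimal_isSubsystem f
  exact ⟨M, hM.prop.nonempty, hM.prop.isClosed, hM.prop.mapsTo,
    fun x hx y hy => hM.internallyChainTransitive.nestedChainRel hx hy⟩
end
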